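/- For an integer n ≥ 2, the greatest common divisor of the binomial coefficients C(n,1), C(n,2), ..., C(n,n-1) equals p if n is a power p^i of a prime p (i ≥ 1), and equals 1 otherwise. -/

import Mathlib

/-- for `n ≥ 2`, the gcd of the binomial coefficients
`C(n,1), …, C(n,n-1)` equals `p` if `n = p^i` is a power of a prime `p`
(`i ≥ 1`), and equals `1` otherwise. -/
theorem statement6 (n : ℕ) (hn : 2 ≤ n) :
    (∀ p i : ℕ, p.Prime → 1 ≤ i → n = p ^ i →
      (Finset.Ico 1 n).gcd n.choose = p) ∧
    ((¬ ∃ p i : ℕ, p.Prime ∧ 1 ≤ i ∧ n = p ^ i) →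
      (Finset.Ico 1 n).gcd n.choose = 1) := by
  have hn_not_min : ¬ IsMin n := not_isMin_iff_ne_bot.2 (by positivity)
  rw [← Finset.Icc_sub_one_right_eq_Ico_of_not_isMin hn_not_min]
  refine ⟨fun p i hp hi hn_eq => ?_, fun hne => ?_⟩
  · have hpow : IsPrimePow n := (isPrimePow_nat_iff n).2 ⟨p, i, hp, hi, hn_eq.symm⟩
    rw [Choose.gcd_choose_eq_minFac_of_isPrimePow hpow, hn_eq, hp.pow_minFac (by omega)]
  · refine Choose.gcd_choose_eq_one_of_not_isPrimePow hn fun hpow => hne ?_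
    obtain ⟨p, i, hp, hi, hn_eq⟩ := (isPrimePow_nat_iff n).1 hpow
    exact ⟨p, i, hp, hi, hn_eq.symm⟩
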